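/- arXiv:2010.10989 — 3 statements merged into one kernel-verified Lean document; each statement's English description precedes it below -/
import Mathlib

section
/- Let x, y be real numbers and i, j nonnegative integers. Define g_n^{(i)}(x) to have second mixed moment E[g_n^{(i)}(x) g_n^{(j)}(y)] = n^{-(1+i+j)} * sum over r from 0 to n of (r)_i (r)_j (1 + x/n)^r (1 + y/n)^r, where (r)_i denotes the falling factorial. Then this quantity converges as n → ∞ to the integral over t in [0,1] of t^{i+j} e^{(x+y)t} dt. -/
/-!
The sum is a Riemann sum. With `G n r = (r)_i/n^i · (r)_j/n^j · (1 + x/n)^r (1 + y/n)^r`, the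
`1/n`-normalised sum over `r < n` is the integral over `[0, 1]` of the step function
`t ↦ G n ⌊t n⌋`, and the term `r = n` contributes `O(1/n)`. Since `⌊t n⌋/n → t`, the step functions
converge pointwise to `t^(i+j) e^((x+y)t)`; they are bounded by `e^(|x|+|y|)` because `(r)_i ≤ n^i`
and `|1 + x/n|^r ≤ e^(r|x|/n)`, so dominated convergence applies.
-/

open Real Filter MeasureTheory Set Topology

section RiemannSum

variable {E : Type*} [NormedAddCommGroup E]

lemma intervalIntegrable_comp_natFloor_natCast_succ (g : ℕ → E) (r : ℕ) :
    IntervalIntegrable (fun u : ℝ => g ⌊u⌋₊) volume r (r + 1) := by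
  rw [intervalIntegrable_iff_integrableOn_Ico_of_le (by linarith),
    integrableOn_congr_fun (fun u hu => congrArg g (Nat.floor_eq_on_Ico r u hu))
      measurableSet_Ico]
  exact integrableOn_const (by simp)

variable [NormedSpace ℝ E] [CompleteSpace E]

lemma integral_comp_natFloor_natCast_succ (g : ℕ → E) (r : ℕ) :
    ∫ u in (r : ℝ)..r + 1, g ⌊u⌋₊ = g r := by
  rw [intervalIntegral.integral_of_le (by linarith), ← integral_Ico_eq_integral_Ioc,
    setIntegral_congr_fun measurableSet_Ico (fun u hu => congrArg g (Nat.floor_eq_on_Ico r u hu)),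
    setIntegral_const, Real.volume_real_Ico]
  simp

lemma integral_comp_natFloor_mul (g : ℕ → E) {n : ℕ} (hn : n ≠ 0) :
    ∫ t in (0 : ℝ)..1, g ⌊t * n⌋₊ = (n : ℝ)⁻¹ • ∑ r ∈ Finset.range n, g r := by
  have hsum := intervalIntegral.sum_integral_adjacent_intervals (μ := volume)
    (f := fun u : ℝ => g ⌊u⌋₊) (a := Nat.cast) (n := n)
    (fun k _ => by simpa using intervalIntegrable_comp_natFloor_natCast_succ g k)
  simp only [Nat.cast_zero, Nat.cast_add, Nat.cast_one,
    integral_comp_natFloor_natCast_succ] at hsum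
  rw [intervalIntegral.integral_comp_mul_right (fun u => g ⌊u⌋₊) (Nat.cast_ne_zero.2 hn),
    zero_mul, one_mul, hsum]

theorem tendsto_inv_smul_sum_range_succ_of_dominated (G : ℕ → ℕ → E) (f : ℝ → E) (C : ℝ)
    (hG : ∀ n r, r ≤ n → ‖G n r‖ ≤ C)
    (hlim : ∀ t ∈ Ioc (0 : ℝ) 1,
      Tendsto (fun n : ℕ => G n ⌊t * n⌋₊) atTop (𝓝 (f t))) :
    Tendsto (fun n : ℕ => (n : ℝ)⁻¹ • ∑ r ∈ Finset.range (n + 1), G n r) atTop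
      (𝓝 (∫ t in (0 : ℝ)..1, f t)) := by
  rw [← uIoc_of_le zero_le_one] at hlim
  have hsteps : Tendsto (fun n : ℕ => ∫ t in (0 : ℝ)..1, G n ⌊t * n⌋₊) atTop
      (𝓝 (∫ t in (0 : ℝ)..1, f t)) := by
    refine intervalIntegral.tendsto_integral_filter_of_dominated_convergence (fun _ => C)
      (.of_forall fun n => ?_) (.of_forall fun n => .of_forall fun t ht => ?_)
      intervalIntegrable_const (.of_forall hlim)
    · exact (StronglyMeasurable.of_discrete.comp_measurable
        (Nat.measurable_floor.comp (measurable_id.mul_const _))).aestronglyMeasurable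
    · rw [uIoc_of_le zero_le_one] at ht
      exact hG n _ (Nat.floor_le_of_le (mul_le_of_le_one_left n.cast_nonneg ht.2))
  have hlast : Tendsto (fun n : ℕ => (n : ℝ)⁻¹ • G n n) atTop (𝓝 0) := by
    refine squeeze_zero_norm (fun n => ?_) (tendsto_const_div_atTop_nhds_zero_nat C)
    rw [norm_smul, norm_inv, Real.norm_natCast, inv_mul_eq_div]
    gcongr
    exact hG n n le_rfl
  rw [← add_zero (∫ t in (0 : ℝ)..1, f t)]
  refine (hsteps.add hlast).congr' ?_
  filter_upwards [eventually_ne_atTop 0] with n hn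
  rw [integral_comp_natFloor_mul _ hn, Finset.sum_range_succ, smul_add]

end RiemannSum

section FloorLimits

variable {a : ℕ → ℕ} {t : ℝ}

lemma tendsto_descFactorial_div_pow_of_tendsto_div
    (ha : Tendsto (fun n => (a n : ℝ) / n) atTop (𝓝 t)) (i : ℕ) :
    Tendsto (fun n => ((a n).descFactorial i : ℝ) / n ^ i) atTop (𝓝 (t ^ i)) := by
  have hfactor : ∀ k : ℕ, Tendsto (fun n => (a n : ℝ) / n - k / n) atTop (𝓝 t) := fun k => by
    simpa using ha.sub (tendsto_const_div_atTop_nhds_zero_nat (k : ℝ))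
  convert tendsto_finsetProd (Finset.range i) fun k _ => hfactor k using 1
  · ext n
    -- `(a)_i = ∏ k < i, (a - k)` in `ℝ` with no truncated subtraction: for `a < i` both vanish.
    rw [← descPochhammer_eval_eq_descFactorial, descPochhammer_eval_eq_prod_range]
    simp_rw [← sub_div]
    rw [Finset.prod_div_distrib, Finset.prod_const, Finset.card_range]
  · simp

lemma tendsto_one_add_div_pow_of_tendsto_div
    (ha : Tendsto (fun n => (a n : ℝ) / n) atTop (𝓝 t)) (x : ℝ) :
    Tendsto (fun n => (1 + x / n) ^ a n) atTop (𝓝 (exp (x * t))) := by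
  -- `(1 + x/n)^a = ((1 + x/n)^n)^(a/n)` once the base is nonnegative.
  have hpow := (tendsto_one_add_div_pow_exp x).rpow ha (.inl (exp_pos x).ne')
  rw [← exp_mul] at hpow
  have hbase : ∀ᶠ n : ℕ in atTop, 0 ≤ 1 + x / n := by
    filter_upwards [(tendsto_const_div_atTop_nhds_zero_nat x).eventually
      (eventually_ge_nhds (by norm_num : (-1 : ℝ) < 0))] with n hn
    linarith
  refine hpow.congr' ?_
  filter_upwards [hbase, eventually_ne_atTop 0] with n hpos hn
  rw [← rpow_natCast, ← rpow_mul hpos, mul_div_cancel₀ _ (Nat.cast_ne_zero.2 hn),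
    rpow_natCast]

end FloorLimits

lemma descFactorial_div_pow_le_one {r n : ℕ} (hr : r ≤ n) (i : ℕ) :
    (r.descFactorial i : ℝ) / n ^ i ≤ 1 :=
  div_le_one_of_le₀ (mod_cast (r.descFactorial_le_pow i).trans (Nat.pow_le_pow_left hr i))
    (by positivity)

lemma abs_one_add_div_pow_le_exp_abs (x : ℝ) {r n : ℕ} (hr : r ≤ n) :
    |1 + x / n| ^ r ≤ exp |x| := by
  calc |1 + x / n| ^ r ≤ exp (|x| / n) ^ r := by
        gcongr
        calc |1 + x / n| ≤ |x| / n + 1 := by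
              simpa [abs_div, add_comm] using abs_add_le (1 : ℝ) (x / n)
          _ ≤ exp (|x| / n) := add_one_le_exp _
    _ = exp (r * |x| / n) := by rw [← exp_nat_mul, mul_div_assoc]
    _ ≤ exp |x| := by
        gcongr
        exact div_le_of_le_mul₀ n.cast_nonneg (abs_nonneg x)
          (by rw [mul_comm]; gcongr)

/-- the covariance of derivatives of the rescaled random polynomial
converges to `∫_0^1 t^(i+j) e^((x+y)t) dt`. -/
theorem covariance_limit (x y : ℝ) (i j : ℕ) :
    Tendsto (fun n : ℕ =>
        (1 / (n : ℝ) ^ (1 + i + j)) *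
          ∑ r ∈ Finset.range (n + 1),
            (r.descFactorial i : ℝ) * (r.descFactorial j : ℝ) *
              (1 + x / n) ^ r * (1 + y / n) ^ r)
      atTop (nhds (∫ t in (0:ℝ)..1, t ^ (i + j) * Real.exp ((x + y) * t))) := by
  set G : ℕ → ℕ → ℝ := fun n r => (r.descFactorial i : ℝ) / n ^ i *
    ((r.descFactorial j : ℝ) / n ^ j) * (1 + x / n) ^ r * (1 + y / n) ^ r
  have hbound : ∀ n r, r ≤ n → ‖G n r‖ ≤ 1 * 1 * exp |x| * exp |y| := fun n r hr => by
    simp only [G, norm_mul, norm_pow, Real.norm_eq_abs, abs_div, Nat.abs_cast, abs_pow]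
    gcongr
    exacts [descFactorial_div_pow_le_one hr i, descFactorial_div_pow_le_one hr j,
      abs_one_add_div_pow_le_exp_abs x hr, abs_one_add_div_pow_le_exp_abs y hr]
  have hlim : ∀ t ∈ Ioc (0 : ℝ) 1, Tendsto (fun n : ℕ => G n ⌊t * n⌋₊) atTop
      (𝓝 (t ^ (i + j) * exp ((x + y) * t))) := fun t ht => by
    have hfloor := (tendsto_nat_floor_mul_div_atTop ht.1.le).comp tendsto_natCast_atTop_atTop
    have hi := tendsto_descFactorial_div_pow_of_tendsto_div hfloor i
    have hj := tendsto_descFactorial_div_pow_of_tendsto_div hfloor j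
    have hx := tendsto_one_add_div_pow_of_tendsto_div hfloor x
    have hy := tendsto_one_add_div_pow_of_tendsto_div hfloor y
    convert ((hi.mul hj).mul hx).mul hy using 2
    rw [pow_add, add_mul, exp_add]
    ring
  refine (tendsto_inv_smul_sum_range_succ_of_dominated G _ _ hbound hlim).congr' ?_
  filter_upwards [eventually_ne_atTop 0] with n hn
  rw [smul_eq_mul, Finset.mul_sum, Finset.mul_sum]
  refine Finset.sum_congr rfl fun r _ => ?_
  simp only [G]
  field_simp
  ring
end

section
/- Let g be an almost surely C^1 Gaussian process on [-M,M] with continuous covariance such that Var g(x) is bounded below by a positive constant on [-M,M], and suppose P(max_{t∈[-M,M]} |g'(t)| ≥ T) ≤ e^M/T for all T > 0. Then for any k intervals I_1,…,I_k ⊂ [-M,M] each of length at most ε^{1/2}, the sum ∑_{j=1}^k P(∃ x ∈ I_j with |g(x)| ≤ ε) = O(ε^{1/4}) as ε → 0, uniformly over such choices of intervals. -/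
/-!
Fix an interval `[a, b]` of length at most `√ε` and put `T = ε^(-1/4)`. Off the event
`max |g'| ≥ T`, of probability at most `e^M ε^(1/4)`, the mean value theorem turns `|g x| ≤ ε`
for some `x ∈ [a, b]` into `|g a| ≤ ε + T √ε ≤ 2 ε^(1/4)`. As `g a` is a centred Gaussian of
variance at least `v`, its density is at most `(2πv)^(-1/2)`, so this has probability at most
`4 ε^(1/4) / √(2πv)`. Summing over the `k` intervals gives `C = k (e^M + 4 / √(2πv))`.
-/

open MeasureTheory ProbabilityTheory Real
open scoped ENNReal NNReal

lemma gaussianPDFReal_le_inv_sqrt (μ : ℝ) (v : ℝ≥0) (x : ℝ) :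
    gaussianPDFReal μ v x ≤ (√(2 * π * v))⁻¹ := by
  rw [gaussianPDFReal]
  refine mul_le_of_le_one_right (by positivity) (Real.exp_le_one_iff.mpr ?_)
  exact div_nonpos_of_nonpos_of_nonneg (neg_nonpos.mpr (sq_nonneg _)) (by positivity)

lemma gaussianReal_Icc_le (μ : ℝ) {v : ℝ≥0} (hv : v ≠ 0) (a b : ℝ) :
    gaussianReal μ v (Set.Icc a b) ≤ ENNReal.ofReal ((b - a) / √(2 * π * v)) := by
  rw [gaussianReal_apply μ hv]
  calc ∫⁻ x in Set.Icc a b, gaussianPDF μ v x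
      ≤ ∫⁻ _ in Set.Icc a b, ENNReal.ofReal (√(2 * π * v))⁻¹ :=
        lintegral_mono fun x => ENNReal.ofReal_le_ofReal (gaussianPDFReal_le_inv_sqrt μ v x)
    _ = ENNReal.ofReal ((b - a) / √(2 * π * v)) := by
        rw [setLIntegral_const, Real.volume_Icc, ← ENNReal.ofReal_mul (by positivity),
          div_eq_mul_inv, mul_comm]

section

variable {Ω : Type*} [MeasurableSpace Ω] {P : Measure Ω}

lemma measure_abs_le_le_of_map_eq_gaussianReal {X : Ω → ℝ} {w : ℝ≥0}
    (hX : P.map X = gaussianReal 0 w) {v : ℝ} (hv : 0 < v) (hvw : v ≤ w) {δ : ℝ} (hδ : 0 ≤ δ) :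
    P {ω | |X ω| ≤ δ} ≤ ENNReal.ofReal (2 * δ / √(2 * π * v)) := by
  have hw : w ≠ 0 := by
    rintro rfl
    exact hv.not_ge hvw
  have hXm : AEMeasurable X P := .of_map_ne_zero (hX ▸ IsProbabilityMeasure.ne_zero _)
  calc P {ω | |X ω| ≤ δ} = P.map X (Set.Icc (-δ) δ) := by
        rw [Measure.map_apply_of_aemeasurable hXm measurableSet_Icc]
        simp only [Set.preimage, Set.mem_Icc, abs_le]
    _ ≤ ENNReal.ofReal ((δ - -δ) / √(2 * π * w)) := hX ▸ gaussianReal_Icc_le 0 hw _ _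
    _ ≤ ENNReal.ofReal (2 * δ / √(2 * π * v)) := by
        rw [sub_neg_eq_add, ← two_mul]
        gcongr

lemma abs_le_abs_add_mul_of_sSup_abs_deriv_lt {f : ℝ → ℝ} (hf : ContDiff ℝ 1 f) {s : Set ℝ}
    (hs : IsCompact s) (hconv : Convex ℝ s) {T : ℝ} (hT : sSup ((fun t => |deriv f t|) '' s) < T)
    {x y : ℝ} (hx : x ∈ s) (hy : y ∈ s) : |f y| ≤ |f x| + T * |y - x| := by
  have hbdd : BddAbove ((fun t => |deriv f t|) '' s) :=
    hs.bddAbove_image (continuous_abs.comp (hf.continuous_deriv le_rfl)).continuousOn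
  have hderiv : ∀ t ∈ s, ‖deriv f t‖ ≤ T := fun t ht =>
    ((le_csSup hbdd ⟨t, ht, rfl⟩).trans_lt hT).le
  have hmvt := hconv.norm_image_sub_le_of_norm_deriv_le
    (fun t _ => (hf.differentiable one_ne_zero).differentiableAt) hderiv hx hy
  have := abs_sub_abs_le_abs_sub (f y) (f x)
  simp only [Real.norm_eq_abs] at hmvt
  linarith

variable {g : Ω → ℝ → ℝ} {M v : ℝ}

lemma map_eval_eq_gaussianReal (hgauss : ∀ (m : ℕ) (c : Fin m → ℝ) (x : Fin m → ℝ),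
      P.map (fun ω => ∑ i, c i * g ω (x i)) =
        gaussianReal 0 (∑ i, ∑ j, c i * c j * ∫ ω, g ω (x i) * g ω (x j) ∂P).toNNReal)
    (x : ℝ) : P.map (fun ω => g ω x) = gaussianReal 0 (∫ ω, g ω x ^ 2 ∂P).toNNReal := by
  simpa [sq] using hgauss 1 (fun _ => 1) (fun _ => x)

lemma measure_exists_abs_le_on_Icc_le (hC1 : ∀ᵐ ω ∂P, ContDiff ℝ 1 (g ω))
    (hlaw : ∀ x, P.map (fun ω => g ω x) = gaussianReal 0 (∫ ω, g ω x ^ 2 ∂P).toNNReal)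
    (hv : 0 < v) (hvar : ∀ x ∈ Set.Icc (-M) M, v ≤ ∫ ω, (g ω x) ^ 2 ∂P)
    (htail : ∀ T : ℝ, 0 < T →
      P {ω | T ≤ sSup ((fun t : ℝ => |deriv (g ω) t|) '' Set.Icc (-M) M)}
        ≤ ENNReal.ofReal (Real.exp M / T))
    {T ε a b : ℝ} (hT : 0 < T) (hε : 0 ≤ ε) (hab : Set.Icc a b ⊆ Set.Icc (-M) M) :
    P {ω | ∃ x ∈ Set.Icc a b, |g ω x| ≤ ε}
      ≤ ENNReal.ofReal (Real.exp M / T)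
        + ENNReal.ofReal (2 * (ε + T * (b - a)) / √(2 * π * v)) := by
  rcases lt_or_ge b a with hba | hab'
  · simp [Set.Icc_eq_empty_of_lt hba]
  have ha : a ∈ Set.Icc (-M) M := hab (Set.left_mem_Icc.mpr hab')
  have hcover : {ω | ∃ x ∈ Set.Icc a b, |g ω x| ≤ ε} ≤ᵐ[P]
      ({ω | T ≤ sSup ((fun t : ℝ => |deriv (g ω) t|) '' Set.Icc (-M) M)} ∪
        {ω | |g ω a| ≤ ε + T * (b - a)} : Set Ω) := by
    filter_upwards [hC1] with ω hω ⟨x, hx, hgx⟩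
    refine (le_or_gt T _).imp id fun hsup => ?_
    have hmvt := abs_le_abs_add_mul_of_sSup_abs_deriv_lt hω isCompact_Icc (convex_Icc _ _)
      hsup (hab hx) ha
    have hxa : |a - x| ≤ b - a := by
      rw [abs_sub_comm, abs_of_nonneg (by linarith [hx.1])]
      linarith [hx.2]
    have := mul_le_mul_of_nonneg_left hxa hT.le
    change |g ω a| ≤ ε + T * (b - a)
    linarith
  calc P {ω | ∃ x ∈ Set.Icc a b, |g ω x| ≤ ε}
      ≤ P {ω | T ≤ sSup ((fun t : ℝ => |deriv (g ω) t|) '' Set.Icc (-M) M)}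
        + P {ω | |g ω a| ≤ ε + T * (b - a)} :=
        (measure_mono_ae hcover).trans (measure_union_le _ _)
    _ ≤ _ := add_le_add (htail T hT) <|
        measure_abs_le_le_of_map_eq_gaussianReal (hlaw a) hv
          ((hvar a ha).trans (Real.le_coe_toNNReal _))
          (add_nonneg hε (mul_nonneg hT.le (sub_nonneg.mpr hab')))

lemma measure_exists_abs_le_on_short_Icc_le (hC1 : ∀ᵐ ω ∂P, ContDiff ℝ 1 (g ω))
    (hlaw : ∀ x, P.map (fun ω => g ω x) = gaussianReal 0 (∫ ω, g ω x ^ 2 ∂P).toNNReal)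
    (hv : 0 < v) (hvar : ∀ x ∈ Set.Icc (-M) M, v ≤ ∫ ω, (g ω x) ^ 2 ∂P)
    (htail : ∀ T : ℝ, 0 < T →
      P {ω | T ≤ sSup ((fun t : ℝ => |deriv (g ω) t|) '' Set.Icc (-M) M)}
        ≤ ENNReal.ofReal (Real.exp M / T))
    {ε a b : ℝ} (hε : 0 < ε) (hε1 : ε ≤ 1) (hab : Set.Icc a b ⊆ Set.Icc (-M) M)
    (hlen : b - a ≤ ε ^ ((1:ℝ)/2)) :
    P {ω | ∃ x ∈ Set.Icc a b, |g ω x| ≤ ε}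
      ≤ ENNReal.ofReal ((Real.exp M + 4 / √(2 * π * v)) * ε ^ ((1:ℝ)/4)) := by
  set q := ε ^ ((1:ℝ)/4)
  have hq : 0 < q := by positivity
  have hεq : ε ≤ q :=
    (Real.rpow_one ε).symm.le.trans (Real.rpow_le_rpow_of_exponent_ge hε hε1 (by norm_num))
  have hTlen : q⁻¹ * (b - a) ≤ q := calc
    q⁻¹ * (b - a) ≤ q⁻¹ * ε ^ ((1:ℝ)/2) := by gcongr
    _ = q := by
      rw [← Real.rpow_neg hε.le, ← Real.rpow_add hε]
      norm_num [q]
  calc P {ω | ∃ x ∈ Set.Icc a b, |g ω x| ≤ ε}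
      ≤ ENNReal.ofReal (Real.exp M / q⁻¹)
        + ENNReal.ofReal (2 * (ε + q⁻¹ * (b - a)) / √(2 * π * v)) :=
        measure_exists_abs_le_on_Icc_le hC1 hlaw hv hvar htail (inv_pos.mpr hq) hε.le hab
    _ ≤ ENNReal.ofReal (Real.exp M * q) + ENNReal.ofReal (2 * (q + q) / √(2 * π * v)) := by
        rw [div_inv_eq_mul]
        gcongr
    _ = ENNReal.ofReal ((Real.exp M + 4 / √(2 * π * v)) * q) := by
        rw [← ENNReal.ofReal_add (by positivity) (by positivity)]
        ring_nf

end

theorem small_value_on_short_intervals_general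
    {Ω : Type*} [MeasurableSpace Ω] (P : Measure Ω)
    (M : ℝ) (g : Ω → ℝ → ℝ)
    (hC1 : ∀ᵐ ω ∂P, ContDiff ℝ 1 (g ω))
    (hgauss : ∀ (m : ℕ) (c : Fin m → ℝ) (x : Fin m → ℝ),
      P.map (fun ω => ∑ i, c i * g ω (x i)) =
        gaussianReal 0 (∑ i, ∑ j, c i * c j * ∫ ω, g ω (x i) * g ω (x j) ∂P).toNNReal)
    (v : ℝ) (hv : 0 < v)
    (hvar : ∀ x ∈ Set.Icc (-M) M, v ≤ ∫ ω, (g ω x) ^ 2 ∂P)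
    (htail : ∀ T : ℝ, 0 < T →
      P {ω | T ≤ sSup ((fun t : ℝ => |deriv (g ω) t|) '' Set.Icc (-M) M)}
        ≤ ENNReal.ofReal (Real.exp M / T))
    (k : ℕ) (hk : 0 < k) :
    ∃ C > (0:ℝ), ∃ ε₀ > (0:ℝ), ∀ ε : ℝ, 0 < ε → ε ≤ ε₀ →
      ∀ a b : Fin k → ℝ,
      (∀ j, Set.Icc (a j) (b j) ⊆ Set.Icc (-M) M) →
      (∀ j, b j - a j ≤ ε ^ ((1:ℝ)/2)) →
      ∑ j, P {ω | ∃ x ∈ Set.Icc (a j) (b j), |g ω x| ≤ ε}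
        ≤ ENNReal.ofReal (C * ε ^ ((1:ℝ)/4)) := by
  set c := Real.exp M + 4 / √(2 * π * v)
  refine ⟨k * c, by positivity, 1, one_pos, fun ε hε hε1 a b hsub hlen => ?_⟩
  calc ∑ j, P {ω | ∃ x ∈ Set.Icc (a j) (b j), |g ω x| ≤ ε}
      ≤ ∑ _j : Fin k, ENNReal.ofReal (c * ε ^ ((1:ℝ)/4)) := Finset.sum_le_sum fun j _ =>
        measure_exists_abs_le_on_short_Icc_le hC1 (map_eval_eq_gaussianReal hgauss) hv hvar
          htail hε hε1 (hsub j) (hlen j)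
    _ = ENNReal.ofReal (k * c * ε ^ ((1:ℝ)/4)) := by
        rw [Finset.sum_const, Finset.card_univ, Fintype.card_fin, nsmul_eq_mul,
          ← ENNReal.ofReal_natCast, ← ENNReal.ofReal_mul (by positivity), mul_assoc]

/-- let `g` be an a.s. `C¹` Gaussian process on `[-M,M]` with
continuous covariance, variance bounded below, and the tail bound
`P(max |g'| ≥ T) ≤ e^M/T`.  Then for any `k` intervals in `[-M,M]` of length at
most `√ε`, the sum of the probabilities that `|g| ≤ ε` somewhere on the interval
is `O(ε^(1/4))`, uniformly over the choice of intervals. -/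
theorem small_value_on_short_intervals
    {Ω : Type*} [MeasurableSpace Ω] (P : Measure Ω) [IsProbabilityMeasure P]
    (M : ℝ) (hM : 0 < M) (g : Ω → ℝ → ℝ)
    (hC1 : ∀ᵐ ω ∂P, ContDiff ℝ 1 (g ω))
    (hgauss : ∀ (m : ℕ) (c : Fin m → ℝ) (x : Fin m → ℝ),
      P.map (fun ω => ∑ i, c i * g ω (x i)) =
        gaussianReal 0 (∑ i, ∑ j, c i * c j * ∫ ω, g ω (x i) * g ω (x j) ∂P).toNNReal)
    (hcov : Continuous (fun p : ℝ × ℝ => ∫ ω, g ω p.1 * g ω p.2 ∂P))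
    (v : ℝ) (hv : 0 < v)
    (hvar : ∀ x ∈ Set.Icc (-M) M, v ≤ ∫ ω, (g ω x) ^ 2 ∂P)
    (htail : ∀ T : ℝ, 0 < T →
      P {ω | T ≤ sSup ((fun t : ℝ => |deriv (g ω) t|) '' Set.Icc (-M) M)}
        ≤ ENNReal.ofReal (Real.exp M / T))
    (k : ℕ) (hk : 0 < k) :
    ∃ C > (0:ℝ), ∃ ε₀ > (0:ℝ), ∀ ε : ℝ, 0 < ε → ε ≤ ε₀ →
      ∀ a b : Fin k → ℝ,
      (∀ j, Set.Icc (a j) (b j) ⊆ Set.Icc (-M) M) →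
      (∀ j, b j - a j ≤ ε ^ ((1:ℝ)/2)) →
      ∑ j, P {ω | ∃ x ∈ Set.Icc (a j) (b j), |g ω x| ≤ ε}
        ≤ ENNReal.ofReal (C * ε ^ ((1:ℝ)/4)) :=
  small_value_on_short_intervals_general P M g hC1 hgauss v hv hvar htail k hk
end

section
/- Let g be the mean-zero Gaussian process with covariance K(x,y) = ∫_0^1 e^{(x+y)t} dt, and for x ≠ y let Σ(x,y) be the 2×2 covariance matrix of (g(x), g(y)). Then det Σ(x,y) = (x-y)^2 · det Cov(g(x), (g(x)-g(y))/(x-y)), and as δ → 0, uniformly for x, y ∈ [-δ, δ] with x ≠ y, det Σ(x,y) = (x-y)^2 (1 + o(1)) · det Cov(g(0), g'(0)); in particular there exist c > 0 and δ_0 > 0 such that det Σ(x,y) ≥ c (x-y)^2 for all distinct x, y ∈ [-δ_0, δ_0]. -/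
/-!
Write `F(s) = ∫₀¹ e^{st} dt`, so that `K x y = F(x + y)` and, with `u = x + y`, `v = x - y`,
`det Σ(x,y) = F(u + v) F(u - v) - F(u)²`. Expanding `e^{vt}` to second order,
`F(u ± v) = J ± v I₁ + v²/2 I₂ + O(v³)`, where `J, I₁, I₂` are the moments `∫₀¹ tᵏ e^{ut} dt`,
`k = 0, 1, 2`. The first-order terms cancel in the product, leaving
`det Σ = v² (J I₂ - I₁²) + O(v³)`, and as `u → 0` the moments tend to `1, 1/2, 1/3`, so
`J I₂ - I₁² → 1/12 = det Cov(g(0), g'(0))`.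
-/

open Real

theorem det_fin_two_symm_eq_sq_mul_det_diffQuot {F : Type*} [Field F] {a b c d : F} (hd : d ≠ 0) :
    !![a, b; b, c].det = d ^ 2 * !![a, (a - b) / d; (a - b) / d, (a - 2 * b + c) / d ^ 2].det := by
  simp only [Matrix.det_fin_two_of]
  field_simp
  ring

lemma abs_exp_sub_taylor_two_le {z : ℝ} (hz : |z| ≤ 1) :
    |exp z - (1 + z + z ^ 2 / 2)| ≤ |z| ^ 3 := by
  have h := Real.exp_bound hz (n := 3) (by norm_num)
  norm_num [Finset.sum_range_succ, Nat.factorial] at h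
  linarith [pow_nonneg (abs_nonneg z) 3]

lemma abs_intervalIntegral_zero_one_le {f : ℝ → ℝ} {C : ℝ}
    (h : ∀ t ∈ Set.Icc (0:ℝ) 1, |f t| ≤ C) : |∫ t in (0:ℝ)..1, f t| ≤ C := by
  simpa using intervalIntegral.norm_integral_le_of_norm_le_const (a := 0) (b := 1) (f := f)
    fun t ht ↦ h t (Set.Ioc_subset_Icc_self (by simpa using ht))

lemma abs_mul_sub_sq_sub_twelfth_le {J I₁ I₂ ε : ℝ} (hε : ε ≤ 2) (hJ : |J - 1| ≤ ε)
    (hI₁ : |I₁ - 1 / 2| ≤ ε) (hI₂ : |I₂ - 1 / 3| ≤ ε) :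
    |J * I₂ - I₁ ^ 2 - 1 / 12| ≤ 7 * ε := by
  obtain ⟨hI₁l, hI₁u⟩ := abs_le.1 hI₁
  obtain ⟨hI₂l, hI₂u⟩ := abs_le.1 hI₂
  have hI₂' : |I₂| ≤ 7 / 3 := abs_le.2 ⟨by linarith, by linarith⟩
  have hI₁' : |I₁ + 1 / 2| ≤ 3 := abs_le.2 ⟨by linarith, by linarith⟩
  have hε0 : 0 ≤ ε := (abs_nonneg _).trans hJ
  calc |J * I₂ - I₁ ^ 2 - 1 / 12|
      = |(J - 1) * I₂ + (I₂ - 1 / 3) - (I₁ - 1 / 2) * (I₁ + 1 / 2)| := by ring_nf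
    _ ≤ |J - 1| * |I₂| + |I₂ - 1 / 3| + |I₁ - 1 / 2| * |I₁ + 1 / 2| := by
        rw [← abs_mul, ← abs_mul]; exact (abs_sub _ _).trans (by gcongr; exact abs_add_le _ _)
    _ ≤ ε * (7 / 3) + ε + ε * 3 := by gcongr
    _ ≤ 7 * ε := by linarith

lemma abs_mul_sub_sq_sub_sq_mul_le {J I₁ I₂ v P Q : ℝ} (hJ : |J| ≤ 3) (hI₁ : |I₁| ≤ 3) (hI₂ : |I₂| ≤ 3)
    (hv : |v| ≤ 1) (hP : |P - (J + v * I₁ + v ^ 2 / 2 * I₂)| ≤ 3 * |v| ^ 3)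
    (hQ : |Q - (J - v * I₁ + v ^ 2 / 2 * I₂)| ≤ 3 * |v| ^ 3) :
    |P * Q - J ^ 2 - v ^ 2 * (J * I₂ - I₁ ^ 2)| ≤ 60 * |v| ^ 3 := by
  set P₀ := J + v * I₁ + v ^ 2 / 2 * I₂
  set Q₀ := J - v * I₁ + v ^ 2 / 2 * I₂
  have hv0 : 0 ≤ |v| := abs_nonneg v
  have hv3 : |v| ^ 3 ≤ 1 := pow_le_one₀ hv0 hv
  have hvI₁ : |v * I₁| ≤ 3 := by rw [abs_mul]; nlinarith [abs_nonneg I₁]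
  have hvI₂ : |v ^ 2 / 2 * I₂| ≤ 3 / 2 := by
    rw [abs_mul, abs_div, abs_pow, abs_two]; nlinarith [abs_nonneg I₂]
  have hP₀ : |P₀| ≤ 8 := by
    have := abs_add_three J (v * I₁) (v ^ 2 / 2 * I₂); linarith
  have hQ₀ : |Q₀| ≤ 8 := by
    have := abs_add_three J (-(v * I₁)) (v ^ 2 / 2 * I₂); rw [abs_neg] at this
    simp only [Q₀, sub_eq_add_neg]; linarith
  have hquartic : |v ^ 4 / 4 * I₂ ^ 2| ≤ 9 / 4 * |v| ^ 3 := by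
    rw [abs_mul, abs_div, abs_pow, abs_pow, show |(4:ℝ)| = 4 by norm_num]
    have : |I₂| ^ 2 ≤ 9 := by nlinarith [abs_nonneg I₂]
    have : |v| ^ 4 ≤ |v| ^ 3 := pow_le_pow_of_le_one hv0 hv (by norm_num)
    nlinarith [pow_nonneg hv0 4, pow_nonneg hv0 3, sq_nonneg |I₂|]
  have hPQ : |(P - P₀) * (Q - Q₀)| ≤ 9 * |v| ^ 3 := by
    rw [abs_mul]
    calc |P - P₀| * |Q - Q₀| ≤ (3 * |v| ^ 3) * (3 * 1) := by gcongr; linarith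
      _ = 9 * |v| ^ 3 := by ring
  calc |P * Q - J ^ 2 - v ^ 2 * (J * I₂ - I₁ ^ 2)|
      = |v ^ 4 / 4 * I₂ ^ 2 + (P - P₀) * Q₀ + (Q - Q₀) * P₀ + (P - P₀) * (Q - Q₀)| := by
        congr 1; simp only [P₀, Q₀]; ring
    _ ≤ |v ^ 4 / 4 * I₂ ^ 2| + |P - P₀| * |Q₀| + |Q - Q₀| * |P₀| + |(P - P₀) * (Q - Q₀)| := by
        rw [← abs_mul, ← abs_mul]
        exact (abs_add_le _ _).trans (by gcongr; exact abs_add_three _ _ _)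
    _ ≤ 9 / 4 * |v| ^ 3 + 3 * |v| ^ 3 * 8 + 3 * |v| ^ 3 * 8 + 9 * |v| ^ 3 := by gcongr
    _ ≤ 60 * |v| ^ 3 := by linarith [pow_nonneg hv0 3]

/-- `∂ᵏ/∂uᵏ ∫₀¹ e^{ut} dt`; at `u = 2x` the cases `k = 0, 1, 2` are `Var g(x)`,
`Cov(g(x), g'(x))` and `Var g'(x)`. -/
noncomputable def expMoment (k : ℕ) (u : ℝ) : ℝ := ∫ t in (0:ℝ)..1, t ^ k * exp (u * t)

lemma expMoment_zero (u : ℝ) : expMoment 0 u = ∫ t in (0:ℝ)..1, exp (u * t) := by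
  simp [expMoment]

lemma abs_expMoment_sub_le (k : ℕ) {u : ℝ} (hu : |u| ≤ 1) :
    |expMoment k u - 1 / (k + 1)| ≤ 2 * |u| := by
  have hsub : expMoment k u - 1 / (k + 1) = ∫ t in (0:ℝ)..1, t ^ k * (exp (u * t) - 1) := by
    simp only [mul_sub, mul_one]
    rw [intervalIntegral.integral_sub ((by fun_prop : Continuous _).intervalIntegrable _ _)
      ((continuous_pow k).intervalIntegrable _ _), integral_pow, expMoment]
    norm_num
  rw [hsub]
  refine abs_intervalIntegral_zero_one_le fun t ⟨ht₀, ht₁⟩ ↦ ?_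
  have htk : |t ^ k| ≤ 1 := by
    rw [abs_of_nonneg (by positivity)]; exact pow_le_one₀ ht₀ ht₁
  have hut : |u * t| ≤ |u| := by
    rw [abs_mul, abs_of_nonneg ht₀]; exact mul_le_of_le_one_right (abs_nonneg u) ht₁
  calc |t ^ k * (exp (u * t) - 1)| = |t ^ k| * |exp (u * t) - 1| := abs_mul _ _
    _ ≤ 1 * (2 * |u|) := by
        gcongr
        exact (abs_exp_sub_one_le (hut.trans hu)).trans (by gcongr)
    _ = 2 * |u| := one_mul _

lemma abs_expMoment_le (k : ℕ) {u : ℝ} (hu : |u| ≤ 1) : |expMoment k u| ≤ 3 := by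
  have h := abs_expMoment_sub_le k hu
  have hk : (1 : ℝ) / (k + 1) ≤ 1 := by
    rw [div_le_one (by positivity)]; linarith [k.cast_nonneg (α := ℝ)]
  have hk0 : (0 : ℝ) ≤ 1 / (k + 1) := by positivity
  rw [abs_le] at h ⊢
  constructor <;> linarith

lemma abs_expMoment_add_sub_taylor_le {u v : ℝ} (hu : |u| ≤ 1) (hv : |v| ≤ 1) :
    |expMoment 0 (u + v) - (expMoment 0 u + v * expMoment 1 u + v ^ 2 / 2 * expMoment 2 u)|
      ≤ 3 * |v| ^ 3 := by
  have hint : ∀ f : ℝ → ℝ, Continuous f → IntervalIntegrable f MeasureTheory.volume 0 1 :=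
    fun f hf ↦ hf.intervalIntegrable 0 1
  have hrem : expMoment 0 (u + v) - (expMoment 0 u + v * expMoment 1 u + v ^ 2 / 2 * expMoment 2 u)
      = ∫ t in (0:ℝ)..1, (exp (v * t) - (1 + v * t + (v * t) ^ 2 / 2)) * exp (u * t) := by
    simp only [expMoment, ← intervalIntegral.integral_const_mul]
    rw [← intervalIntegral.integral_add (hint _ (by fun_prop)) (hint _ (by fun_prop)),
      ← intervalIntegral.integral_add (hint _ (by fun_prop)) (hint _ (by fun_prop)),
      ← intervalIntegral.integral_sub (hint _ (by fun_prop)) (hint _ (by fun_prop))]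
    congr 1 with t
    rw [add_mul, exp_add]
    ring
  rw [hrem]
  refine abs_intervalIntegral_zero_one_le fun t ⟨ht₀, ht₁⟩ ↦ ?_
  have hvt : |v * t| ≤ |v| := by
    rw [abs_mul, abs_of_nonneg ht₀]; exact mul_le_of_le_one_right (abs_nonneg v) ht₁
  have hut : |u * t| ≤ 1 := by
    rw [abs_mul, abs_of_nonneg ht₀]; nlinarith [abs_nonneg u]
  have hexp : |exp (u * t)| ≤ 3 := by
    rw [abs_of_pos (exp_pos _)]
    calc exp (u * t) ≤ exp 1 := exp_le_exp.2 (le_of_abs_le hut)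
      _ ≤ 3 := by linarith [exp_one_lt_d9]
  calc |(exp (v * t) - (1 + v * t + (v * t) ^ 2 / 2)) * exp (u * t)|
      = |exp (v * t) - (1 + v * t + (v * t) ^ 2 / 2)| * |exp (u * t)| := abs_mul _ _
    _ ≤ |v| ^ 3 * 3 := by
        gcongr
        exact (abs_exp_sub_taylor_two_le (hvt.trans hv)).trans (by gcongr)
    _ = 3 * |v| ^ 3 := mul_comm _ _

lemma abs_expMoment_mul_sub_sq_sub_le {u v : ℝ} (hu : |u| ≤ 1) (hv : |v| ≤ 1) :
    |expMoment 0 (u + v) * expMoment 0 (u - v) - expMoment 0 u ^ 2 - v ^ 2 / 12|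
      ≤ 60 * (|u| + |v|) * v ^ 2 := by
  have hJ := abs_expMoment_sub_le 0 hu
  have hI₁ := abs_expMoment_sub_le 1 hu
  have hI₂ := abs_expMoment_sub_le 2 hu
  norm_num at hJ hI₁ hI₂
  have hdet := abs_mul_sub_sq_sub_twelfth_le (by linarith) hJ hI₁ hI₂
  have htaylor_neg := abs_expMoment_add_sub_taylor_le hu (v := -v) (by rwa [abs_neg])
  simp only [← sub_eq_add_neg, abs_neg, neg_mul, even_two, Even.neg_pow] at htaylor_neg
  have hprod := abs_mul_sub_sq_sub_sq_mul_le (abs_expMoment_le 0 hu) (abs_expMoment_le 1 hu)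
    (abs_expMoment_le 2 hu) hv (abs_expMoment_add_sub_taylor_le hu hv) htaylor_neg
  set J := expMoment 0 u
  set I₁ := expMoment 1 u
  set I₂ := expMoment 2 u
  have hv3 : |v| ^ 3 = |v| * v ^ 2 := by rw [← sq_abs v]; ring
  calc |expMoment 0 (u + v) * expMoment 0 (u - v) - J ^ 2 - v ^ 2 / 12|
      = |(expMoment 0 (u + v) * expMoment 0 (u - v) - J ^ 2 - v ^ 2 * (J * I₂ - I₁ ^ 2))
          + v ^ 2 * (J * I₂ - I₁ ^ 2 - 1 / 12)| := by ring_nf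
    _ ≤ 60 * |v| ^ 3 + v ^ 2 * (7 * (2 * |u|)) := by
        refine (abs_add_le _ _).trans (add_le_add hprod ?_)
        rw [abs_mul, abs_of_nonneg (sq_nonneg v)]
        exact mul_le_mul_of_nonneg_left hdet (sq_nonneg v)
    _ ≤ 60 * (|u| + |v|) * v ^ 2 := by
        rw [hv3]; nlinarith [mul_nonneg (abs_nonneg u) (sq_nonneg v)]

lemma abs_expMoment_det_sub_le {x y : ℝ} (hx : |x| ≤ 1 / 4) (hy : |y| ≤ 1 / 4) :
    |expMoment 0 (x + x) * expMoment 0 (y + y) - expMoment 0 (x + y) ^ 2 - (x - y) ^ 2 / 12|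
      ≤ 120 * (|x| + |y|) * (x - y) ^ 2 := by
  have hu := abs_add_le x y
  have hv := abs_sub x y
  rw [show x + x = (x + y) + (x - y) by ring, show y + y = (x + y) - (x - y) by ring]
  refine (abs_expMoment_mul_sub_sq_sub_le (by linarith) (by linarith)).trans ?_
  exact mul_le_mul_of_nonneg_right (by linarith) (sq_nonneg _)

/-- for the covariance kernel `K(x,y) = ∫_0^1 e^((x+y)t) dt` of the
limiting Gaussian process `g`, with `Σ(x,y)` the covariance matrix of
`(g(x), g(y))`, we have the identity
`det Σ(x,y) = (x-y)^2 det Cov(g(x), (g(x)-g(y))/(x-y))`; as `δ → 0`, uniformly on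
`[-δ,δ]`, `det Σ(x,y) = (x-y)^2 (1+o(1)) det Cov(g(0), g'(0))`
(here `Cov(g(0), g'(0)) = !![1, 1/2; 1/2, 1/3]`), and in particular
`det Σ(x,y) ≥ c (x-y)^2` for some `c > 0` on a neighborhood of `0`. -/
theorem det_covariance_lower_bound
    (K : ℝ → ℝ → ℝ)
    (hK : ∀ x y : ℝ, K x y = ∫ t in (0:ℝ)..1, Real.exp ((x + y) * t)) :
    (∀ x y : ℝ, x ≠ y →
      (Matrix.det !![K x x, K x y; K x y, K y y] =
        (x - y) ^ 2 *
          Matrix.det !![K x x, (K x x - K x y) / (x - y);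
            (K x x - K x y) / (x - y),
            (K x x - 2 * K x y + K y y) / (x - y) ^ 2])) ∧
    (∀ η : ℝ, 0 < η → ∃ δ₀ > (0:ℝ), ∀ x ∈ Set.Icc (-δ₀) δ₀,
      ∀ y ∈ Set.Icc (-δ₀) δ₀, x ≠ y →
      |Matrix.det !![K x x, K x y; K x y, K y y] -
          (x - y) ^ 2 * Matrix.det !![(1:ℝ), 1/2; 1/2, 1/3]|
        ≤ η * (x - y) ^ 2) ∧
    (∃ c > (0:ℝ), ∃ δ₀ > (0:ℝ), ∀ x ∈ Set.Icc (-δ₀) δ₀,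
      ∀ y ∈ Set.Icc (-δ₀) δ₀, x ≠ y →
      c * (x - y) ^ 2 ≤ Matrix.det !![K x x, K x y; K x y, K y y]) := by
  have hdet (x y : ℝ) : !![K x x, K x y; K x y, K y y].det =
      expMoment 0 (x + x) * expMoment 0 (y + y) - expMoment 0 (x + y) ^ 2 := by
    simp only [Matrix.det_fin_two_of, hK, ← expMoment_zero]
    ring
  have hhilbert : !![(1:ℝ), 1/2; 1/2, 1/3].det = 1 / 12 := by
    rw [Matrix.det_fin_two_of]; norm_num
  have hclose (η : ℝ) (hη : 0 < η) : ∃ δ₀ > (0:ℝ), ∀ x ∈ Set.Icc (-δ₀) δ₀,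
      ∀ y ∈ Set.Icc (-δ₀) δ₀, x ≠ y →
      |!![K x x, K x y; K x y, K y y].det - (x - y) ^ 2 * !![(1:ℝ), 1/2; 1/2, 1/3].det|
        ≤ η * (x - y) ^ 2 := by
    refine ⟨min (1 / 4) (η / 240), by positivity, fun x hx y hy _ ↦ ?_⟩
    have hδ := min_le_left (1 / 4) (η / 240)
    have hδη := min_le_right (1 / 4) (η / 240)
    have hx' := abs_le.2 hx
    have hy' := abs_le.2 hy
    rw [hdet, hhilbert, mul_one_div]
    refine (abs_expMoment_det_sub_le (by linarith) (by linarith)).trans ?_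
    gcongr
    linarith
  refine ⟨fun x y hxy ↦ det_fin_two_symm_eq_sq_mul_det_diffQuot (sub_ne_zero.2 hxy),
    hclose, 1 / 24, by norm_num, ?_⟩
  obtain ⟨δ₀, hδ₀, h⟩ := hclose (1 / 24) (by norm_num)
  refine ⟨δ₀, hδ₀, fun x hx y hy hxy ↦ ?_⟩
  have hlower := (abs_le.1 (h x hx y hy hxy)).1
  rw [hhilbert] at hlower
  linarith
end
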